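/- For n ≥ 4, the set Γⁿ of 𝒮†₁-formulas over atoms p₀,…,p_{2n−1}, q₀,…,q_{2n+1} is unsatisfiable; in fact, already the subset consisting of: ∃_{=1}(p_i, p_{i+1}) for 0 ≤ i ≤ 2n−2; ∃_{≤0}(p₀, p_{2n−1}); ∃_{=1}(q_i, q_{i+1}) for even i, 0 ≤ i ≤ 2n; ∃_{≤0}(p_i, q̄_i) for 0 ≤ i ≤ 2n−1; and ∃_{≤0}(p_i, q̄_{i+2}) for 0 ≤ i ≤ 2n−1, is unsatisfiable. -/

import Mathlib

/-- Literals over a set of atoms `P`: an atom or a negated atom. -/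
inductive Lit (P : Type) : Type
  | pos (p : P)
  | neg (p : P)
deriving DecidableEq

/-- Formulas of the (extended) numerical syllogistic: `∃_{≤ i}(ℓ,m)` and `∃_{> i}(ℓ,m)`. -/
inductive Fm (P : Type) : Type
  | le (i : ℕ) (l m : Lit P)
  | gt (i : ℕ) (l m : Lit P)
deriving DecidableEq

/-- Interpretation of a literal in a structure with domain `A` given by `I`. -/
def Lit.interp {P A : Type} (I : P → Set A) : Lit P → Set A
  | .pos p => I p
  | .neg p => (I p)ᶜ

/-- Truth of a formula in a structure: cardinality constraints on `ℓ^𝔄 ∩ m^𝔄`. -/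
def Fm.sat {P A : Type} (I : P → Set A) : Fm P → Prop
  | .le i l m => Cardinal.mk ↥(l.interp I ∩ m.interp I) ≤ (i : Cardinal)
  | .gt i l m => (i : Cardinal) < Cardinal.mk ↥(l.interp I ∩ m.interp I)

/-- Semantic entailment: every structure (nonempty domain) satisfying `Θ` satisfies `ψ`. -/
def Entails {P : Type} (Θ : Set (Fm P)) (ψ : Fm P) : Prop :=
  ∀ (A : Type) (_ : Nonempty A) (I : P → Set A), (∀ φ ∈ Θ, φ.sat I) → ψ.sat I

/-- The negation map, swapping `∃_{≤ i}` and `∃_{> i}`. -/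
def Fm.negate {P : Type} : Fm P → Fm P
  | .le i l m => .gt i l m
  | .gt i l m => .le i l m

/-- Swap the (unordered) arguments of a formula. -/
def Fm.swap {P : Type} : Fm P → Fm P
  | .le i l m => .le i m l
  | .gt i l m => .gt i m l

/-- The numerical index of a formula. -/
def Fm.idx {P : Type} : Fm P → ℕ
  | .le i _ _ => i
  | .gt i _ _ => i

/-- The atom of a literal. -/
def Lit.atom {P : Type} : Lit P → P
  | .pos p => p
  | .neg p => p

/-- The two (unordered) literal arguments of a formula. -/
def Fm.args {P : Type} : Fm P → Lit P × Lit P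
  | .le _ l m => (l, m)
  | .gt _ l m => (l, m)

/-- All atoms of a formula lie in `S`. -/
def Fm.atomsIn {P : Type} (S : Set P) (φ : Fm P) : Prop :=
  φ.args.1.atom ∈ S ∧ φ.args.2.atom ∈ S

/-- Applying a substitution to a literal. -/
def Lit.map {P : Type} (g : P → P) : Lit P → Lit P
  | .pos p => .pos (g p)
  | .neg p => .neg (g p)

/-- Applying a substitution to a formula. -/
def Fm.map {P : Type} (g : P → P) : Fm P → Fm P
  | .le i l m => .le i (l.map g) (m.map g)
  | .gt i l m => .gt i (l.map g) (m.map g)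

/-- A syllogistic rule: a finite set of antecedents and a consequent. -/
structure Rule (P : Type) where
  ants : Finset (Fm P)
  con : Fm P

/-- The direct syllogistic derivation relation `⊢_X`. -/
inductive Derives {P : Type} (X : Set (Rule P)) : Set (Fm P) → Fm P → Prop
  | prem {Θ : Set (Fm P)} {θ : Fm P} : θ ∈ Θ → Derives X Θ θ
  | rule {Θ : Set (Fm P)} (r : Rule P) (g : P → P) : r ∈ X →
      (∀ ψ ∈ r.ants, Derives X Θ (ψ.map g)) → Derives X Θ (r.con.map g)

/-- The indirect syllogistic derivation relation `⊩_X` (with reductio ad absurdum). -/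
inductive IndDerives {P : Type} (X : Set (Rule P)) : Set (Fm P) → Fm P → Prop
  | prem {Θ : Set (Fm P)} {θ : Fm P} : θ ∈ Θ → IndDerives X Θ θ
  | rule {Θ : Set (Fm P)} (r : Rule P) (g : P → P) : r ∈ X →
      (∀ ψ ∈ r.ants, IndDerives X Θ (ψ.map g)) → IndDerives X Θ (r.con.map g)
  | raa {Θ : Set (Fm P)} {θ : Fm P} (i : ℕ) (p : P) :
      IndDerives X (insert θ Θ) (Fm.gt i (Lit.pos p) (Lit.neg p)) →
      IndDerives X Θ θ.negate
/-- Atoms `p₀,…` (left) and `q₀,…` (right). -/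
abbrev SAtom : Type := Sum ℕ ℕ

def pL (i : ℕ) : Lit SAtom := Lit.pos (Sum.inl i)
def pN (i : ℕ) : Lit SAtom := Lit.neg (Sum.inl i)
def qL (j : ℕ) : Lit SAtom := Lit.pos (Sum.inr j)
def qN (j : ℕ) : Lit SAtom := Lit.neg (Sum.inr j)

/-- Membership in the set `Γⁿ` of `𝒮†₁`-formulas (groups (3)–(19) of the paper);
formulas are identified up to the order of their arguments via `symm`. -/
inductive GammaMem (n : ℕ) : Fm SAtom → Prop
  -- (3): ∃*_{=1}(p_i, p_{i+1}), 0 ≤ i ≤ 2n−2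
  | pp1a {i : ℕ} : i ≤ 2*n-2 → GammaMem n (.gt 0 (pL i) (pL (i+1)))
  | pp1b {i : ℕ} : i ≤ 2*n-2 → GammaMem n (.le 1 (pL i) (pL (i+1)))
  -- (4): ∃*_{=1}(p_i, p_{i+3}), i even, 0 ≤ i ≤ 2n−4
  | pp2a {i : ℕ} : Even i → i ≤ 2*n-4 → GammaMem n (.gt 0 (pL i) (pL (i+3)))
  | pp2b {i : ℕ} : Even i → i ≤ 2*n-4 → GammaMem n (.le 1 (pL i) (pL (i+3)))
  -- (5): ∃*_{≤0}(p₀, p_{2n−1})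
  | pp3a : GammaMem n (.le 0 (pL 0) (pL (2*n-1)))
  | pp3b : GammaMem n (.le 1 (pL 0) (pL (2*n-1)))
  -- (6): ∃*_{>1}(p_i, p_j)
  | pp4a {i j : ℕ} : i ≤ j → j ≤ 2*n-1 → j ≠ i+1 → (Odd i ∨ j ≠ i+3) →
      (i ≠ 0 ∨ j ≠ 2*n-1) → GammaMem n (.gt 0 (pL i) (pL j))
  | pp4b {i j : ℕ} : i ≤ j → j ≤ 2*n-1 → j ≠ i+1 → (Odd i ∨ j ≠ i+3) →
      (i ≠ 0 ∨ j ≠ 2*n-1) → GammaMem n (.gt 1 (pL i) (pL j))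
  -- (7): ∃*_{≤0}(p_i, p̄_i)
  | pp5a {i : ℕ} : i ≤ 2*n-1 → GammaMem n (.le 0 (pL i) (pN i))
  | pp5b {i : ℕ} : i ≤ 2*n-1 → GammaMem n (.le 1 (pL i) (pN i))
  -- (8): ∃*_{>1}(p_i, p̄_j), i ≠ j
  | pp6a {i j : ℕ} : i ≤ 2*n-1 → j ≤ 2*n-1 → i ≠ j → GammaMem n (.gt 0 (pL i) (pN j))
  | pp6b {i j : ℕ} : i ≤ 2*n-1 → j ≤ 2*n-1 → i ≠ j → GammaMem n (.gt 1 (pL i) (pN j))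
  -- (9): ∃*_{>1}(p̄_i, p̄_j)
  | pp7a {i j : ℕ} : i ≤ j → j ≤ 2*n-1 → GammaMem n (.gt 0 (pN i) (pN j))
  | pp7b {i j : ℕ} : i ≤ j → j ≤ 2*n-1 → GammaMem n (.gt 1 (pN i) (pN j))
  -- (10): ∃*_{=1}(q_i, q_{i+1}), i even, 0 ≤ i ≤ 2n
  | qq1a {i : ℕ} : Even i → i ≤ 2*n → GammaMem n (.gt 0 (qL i) (qL (i+1)))
  | qq1b {i : ℕ} : Even i → i ≤ 2*n → GammaMem n (.le 1 (qL i) (qL (i+1)))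
  -- (11): ∃*_{>1}(q_i, q_j)
  | qq2a {i j : ℕ} : i ≤ j → j ≤ 2*n+1 → (Odd i ∨ j ≠ i+1) → GammaMem n (.gt 0 (qL i) (qL j))
  | qq2b {i j : ℕ} : i ≤ j → j ≤ 2*n+1 → (Odd i ∨ j ≠ i+1) → GammaMem n (.gt 1 (qL i) (qL j))
  -- (12): ∃*_{≤0}(q_i, q̄_i)
  | qq3a {i : ℕ} : i ≤ 2*n+1 → GammaMem n (.le 0 (qL i) (qN i))
  | qq3b {i : ℕ} : i ≤ 2*n+1 → GammaMem n (.le 1 (qL i) (qN i))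
  -- (13): ∃*_{>1}(q_i, q̄_j), i ≠ j
  | qq4a {i j : ℕ} : i ≤ 2*n+1 → j ≤ 2*n+1 → i ≠ j → GammaMem n (.gt 0 (qL i) (qN j))
  | qq4b {i j : ℕ} : i ≤ 2*n+1 → j ≤ 2*n+1 → i ≠ j → GammaMem n (.gt 1 (qL i) (qN j))
  -- (14): ∃*_{>1}(q̄_i, q̄_j)
  | qq5a {i j : ℕ} : i ≤ j → j ≤ 2*n+1 → GammaMem n (.gt 0 (qN i) (qN j))
  | qq5b {i j : ℕ} : i ≤ j → j ≤ 2*n+1 → GammaMem n (.gt 1 (qN i) (qN j))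
  -- (15): ∃*_{=1}(p_{i+1}, q_i), i even, 0 ≤ i ≤ 2n−2
  | pq1a {i : ℕ} : Even i → i ≤ 2*n-2 → GammaMem n (.gt 0 (pL (i+1)) (qL i))
  | pq1b {i : ℕ} : Even i → i ≤ 2*n-2 → GammaMem n (.le 1 (pL (i+1)) (qL i))
  -- (16): ∃*_{=1}(p_i, q_{i+1}), 0 ≤ i ≤ 2n−1
  | pq2a {i : ℕ} : i ≤ 2*n-1 → GammaMem n (.gt 0 (pL i) (qL (i+1)))
  | pq2b {i : ℕ} : i ≤ 2*n-1 → GammaMem n (.le 1 (pL i) (qL (i+1)))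
  -- (17): ∃*_{=1}(p_i, q_{i+3}), i even, 0 ≤ i ≤ 2n−2
  | pq3a {i : ℕ} : Even i → i ≤ 2*n-2 → GammaMem n (.gt 0 (pL i) (qL (i+3)))
  | pq3b {i : ℕ} : Even i → i ≤ 2*n-2 → GammaMem n (.le 1 (pL i) (qL (i+3)))
  -- (18): ∃*_{>1}(p_i, q_j)
  | pq4a {i j : ℕ} : i ≤ 2*n-1 → j ≤ 2*n+1 → j ≠ i+1 → (Odd i ∨ j ≠ i+3) →
      (Odd j ∨ i ≠ j+1) → GammaMem n (.gt 0 (pL i) (qL j))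
  | pq4b {i j : ℕ} : i ≤ 2*n-1 → j ≤ 2*n+1 → j ≠ i+1 → (Odd i ∨ j ≠ i+3) →
      (Odd j ∨ i ≠ j+1) → GammaMem n (.gt 1 (pL i) (qL j))
  -- (19): ∃*_{≤0}(p_i, q̄_i)
  | pq5a {i : ℕ} : i ≤ 2*n-1 → GammaMem n (.le 0 (pL i) (qN i))
  | pq5b {i : ℕ} : i ≤ 2*n-1 → GammaMem n (.le 1 (pL i) (qN i))
  -- (20): ∃*_{≤0}(p_i, q̄_{i+2})
  | pq6a {i : ℕ} : i ≤ 2*n-1 → GammaMem n (.le 0 (pL i) (qN (i+2)))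
  | pq6b {i : ℕ} : i ≤ 2*n-1 → GammaMem n (.le 1 (pL i) (qN (i+2)))
  -- (21): ∃*_{>1}(p_i, q̄_j), j ≠ i, j ≠ i+2
  | pq7a {i j : ℕ} : i ≤ 2*n-1 → j ≤ 2*n+1 → j ≠ i → j ≠ i+2 → GammaMem n (.gt 0 (pL i) (qN j))
  | pq7b {i j : ℕ} : i ≤ 2*n-1 → j ≤ 2*n+1 → j ≠ i → j ≠ i+2 → GammaMem n (.gt 1 (pL i) (qN j))
  -- (22): ∃*_{>1}(p̄_i, q_j)
  | pq8a {i j : ℕ} : i ≤ 2*n-1 → j ≤ 2*n+1 → GammaMem n (.gt 0 (pN i) (qL j))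
  | pq8b {i j : ℕ} : i ≤ 2*n-1 → j ≤ 2*n+1 → GammaMem n (.gt 1 (pN i) (qL j))
  -- (23): ∃*_{>1}(p̄_i, q̄_j)
  | pq9a {i j : ℕ} : i ≤ 2*n-1 → j ≤ 2*n+1 → GammaMem n (.gt 0 (pN i) (qN j))
  | pq9b {i j : ℕ} : i ≤ 2*n-1 → j ≤ 2*n+1 → GammaMem n (.gt 1 (pN i) (qN j))
  -- arguments of formulas are unordered
  | symm {φ : Fm SAtom} : GammaMem n φ → GammaMem n φ.swap

/-- The set `Γⁿ`. -/
def Gamma (n : ℕ) : Set (Fm SAtom) := { φ | GammaMem n φ }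

/-- The formulas removed from `Γⁿ` to form `Γⁿ_t` (both argument orders). -/
def GammaRem (t : ℕ) : Set (Fm SAtom) :=
  {Fm.gt 0 (pL (2*t-1)) (pL (2*t)), Fm.gt 0 (pL (2*t)) (pL (2*t-1)),
   Fm.gt 0 (pL (2*t-2)) (pL (2*t+1)), Fm.gt 0 (pL (2*t+1)) (pL (2*t-2)),
   Fm.le 1 (qL (2*t)) (qL (2*t+1)), Fm.le 1 (qL (2*t+1)) (qL (2*t))}

/-- The formulas added to form `Γⁿ_t` (both argument orders). -/
def GammaAdd (t : ℕ) : Set (Fm SAtom) :=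
  {Fm.le 0 (pL (2*t-1)) (pL (2*t)), Fm.le 0 (pL (2*t)) (pL (2*t-1)),
   Fm.le 0 (pL (2*t-2)) (pL (2*t+1)), Fm.le 0 (pL (2*t+1)) (pL (2*t-2)),
   Fm.gt 1 (qL (2*t)) (qL (2*t+1)), Fm.gt 1 (qL (2*t+1)) (qL (2*t))}

/-- The satisfiable variant `Γⁿ_t`. -/
def GammaT (n t : ℕ) : Set (Fm SAtom) := (Gamma n \ GammaRem t) ∪ GammaAdd t
/-- The key subset of `Γⁿ` used in the unsatisfiability proof. -/
def GammaCore (n : ℕ) : Set (Fm SAtom) :=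
  { φ | (∃ i ≤ 2*n-2, φ = Fm.gt 0 (pL i) (pL (i+1)) ∨ φ = Fm.le 1 (pL i) (pL (i+1))) ∨
        φ = Fm.le 0 (pL 0) (pL (2*n-1)) ∨
        (∃ i, Even i ∧ i ≤ 2*n ∧
          (φ = Fm.gt 0 (qL i) (qL (i+1)) ∨ φ = Fm.le 1 (qL i) (qL (i+1)))) ∨
        (∃ i ≤ 2*n-1, φ = Fm.le 0 (pL i) (qN i)) ∨
        (∃ i ≤ 2*n-1, φ = Fm.le 0 (pL i) (qN (i+2))) }

/-! Pick `a_h ∈ p_{2h} ∩ p_{2h+1}` for `h < n`. The inclusions `p_i ⊆ q_i` and `p_i ⊆ q_{i+2}`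
put both `a_h` and `a_{h+1}` into `q_{2h+2} ∩ q_{2h+3}`, which has at most one element, so all
the `a_h` coincide and `a_0 ∈ p_0 ∩ p_{2n-1}`, contradicting `∃_{≤0}(p₀, p_{2n−1})`. -/

namespace Fm

variable {P A : Type} (I : P → Set A) (l m : Lit P)

theorem sat_gt_zero_iff : (Fm.gt 0 l m).sat I ↔ (l.interp I ∩ m.interp I).Nonempty := by
  simp only [sat, Nat.cast_zero, pos_iff_ne_zero, Cardinal.mk_set_ne_zero_iff]

theorem sat_le_zero_iff : (Fm.le 0 l m).sat I ↔ l.interp I ∩ m.interp I = ∅ := by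
  simp only [sat, Nat.cast_zero, nonpos_iff_eq_zero, Cardinal.mk_set_eq_zero_iff]

theorem sat_le_one_iff : (Fm.le 1 l m).sat I ↔ (l.interp I ∩ m.interp I).Subsingleton := by
  simp only [sat, Nat.cast_one, Cardinal.mk_le_one_iff_set_subsingleton]

theorem sat_le_zero_pos_neg_iff (p q : P) :
    (Fm.le 0 (.pos p) (.neg q)).sat I ↔ I p ⊆ I q := by
  rw [sat_le_zero_iff]
  exact Set.sdiff_eq_empty

end Fm

theorem Set.Nonempty.eq_of_subsingleton_union {α : Type*} {s t : Set α}
    (hs : s.Nonempty) (ht : t.Nonempty) (h : (s ∪ t).Subsingleton) : s = t := by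
  obtain ⟨a, ha⟩ := hs
  obtain ⟨b, hb⟩ := ht
  ext x
  constructor
  · intro hx
    exact h (Or.inl hx) (Or.inr hb) ▸ hb
  · intro hx
    exact h (Or.inr hx) (Or.inl ha) ▸ ha

theorem Set.eq_zero_of_subsingleton_union_succ {α : Type*} (s : ℕ → Set α) (m : ℕ)
    (hs : ∀ h ≤ m, (s h).Nonempty) (hsub : ∀ h < m, (s h ∪ s (h + 1)).Subsingleton) :
    ∀ h ≤ m, s h = s 0 := by
  intro h
  induction h with
  | zero => intro _; rfl
  | succ h ih =>
    intro hh
    rw [← ih (by omega)]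
    exact ((hs h (by omega)).eq_of_subsingleton_union (hs (h + 1) hh) (hsub h hh)).symm

theorem inter_nonempty_of_pairs {α : Type*} (P Q : ℕ → Set α) (m : ℕ)
    (hP : ∀ h ≤ m, (P (2 * h) ∩ P (2 * h + 1)).Nonempty)
    (hQ : ∀ h < m, (Q (2 * h + 2) ∩ Q (2 * h + 3)).Subsingleton)
    (hPQ : ∀ i ≤ 2 * m + 1, P i ⊆ Q i) (hPQ₂ : ∀ i ≤ 2 * m + 1, P i ⊆ Q (i + 2)) :
    (P 0 ∩ P (2 * m + 1)).Nonempty := by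
  -- block `h` reaches `Q (2h+2) ∩ Q (2h+3)` by the shifted inclusions, block `h+1` directly
  have hsub : ∀ h < m, (P (2 * h) ∩ P (2 * h + 1) ∪
      P (2 * (h + 1)) ∩ P (2 * (h + 1) + 1)).Subsingleton := fun h hh =>
    (hQ h hh).anti <| Set.union_subset
      (Set.inter_subset_inter (hPQ₂ _ (by omega)) (hPQ₂ _ (by omega)))
      (Set.inter_subset_inter (hPQ _ (by omega)) (hPQ _ (by omega)))
  have hchain := Set.eq_zero_of_subsingleton_union_succ _ m hP hsub m le_rfl
  obtain ⟨a, ha⟩ := hP m le_rfl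
  have ha₀ : a ∈ P (2 * 0) ∩ P (2 * 0 + 1) := hchain ▸ ha
  exact ⟨a, ha₀.1, ha.2⟩

theorem gammaCore_subset_gamma (n : ℕ) : GammaCore n ⊆ Gamma n := by
  rintro φ (⟨i, hi, rfl | rfl⟩ | rfl | ⟨i, he, hi, rfl | rfl⟩ | ⟨i, hi, rfl⟩ | ⟨i, hi, rfl⟩)
  · exact GammaMem.pp1a hi
  · exact GammaMem.pp1b hi
  · exact GammaMem.pp3a
  · exact GammaMem.qq1a he hi
  · exact GammaMem.qq1b he hi
  · exact GammaMem.pq5a hi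
  · exact GammaMem.pq6a hi

theorem not_sat_gammaCore (m : ℕ) {A : Type} (I : SAtom → Set A) :
    ¬ ∀ φ ∈ GammaCore (m + 1), φ.sat I := by
  intro hI
  have hP : ∀ h ≤ m, (I (.inl (2 * h)) ∩ I (.inl (2 * h + 1))).Nonempty := fun h hh =>
    (Fm.sat_gt_zero_iff I _ _).1 (hI _ (Or.inl ⟨2 * h, by omega, Or.inl rfl⟩))
  have hQ : ∀ h < m, (I (.inr (2 * h + 2)) ∩ I (.inr (2 * h + 3))).Subsingleton := fun h hh =>
    (Fm.sat_le_one_iff I _ _).1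
      (hI _ (Or.inr (Or.inr (Or.inl ⟨2 * h + 2, ⟨h + 1, by ring⟩, by omega, Or.inr rfl⟩))))
  have hPQ : ∀ i ≤ 2 * m + 1, I (.inl i) ⊆ I (.inr i) := fun i hi =>
    (Fm.sat_le_zero_pos_neg_iff I _ _).1
      (hI _ (Or.inr (Or.inr (Or.inr (Or.inl ⟨i, by omega, rfl⟩)))))
  have hPQ₂ : ∀ i ≤ 2 * m + 1, I (.inl i) ⊆ I (.inr (i + 2)) := fun i hi =>
    (Fm.sat_le_zero_pos_neg_iff I _ _).1
      (hI _ (Or.inr (Or.inr (Or.inr (Or.inr ⟨i, by omega, rfl⟩)))))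
  have hdisj := (Fm.sat_le_zero_iff I _ _).1 (hI _ (Or.inr (Or.inl rfl)))
  rw [show 2 * (m + 1) - 1 = 2 * m + 1 by omega] at hdisj
  exact (inter_nonempty_of_pairs _ _ m hP hQ hPQ hPQ₂).ne_empty hdisj

/-- for `n ≥ 4`, the subset `GammaCore n` of `Γⁿ` is already
unsatisfiable, and so is `Γⁿ` itself. -/
theorem gamma_unsatisfiable (n : ℕ) (hn : 4 ≤ n) :
    (¬ ∃ (A : Type) (_ : Nonempty A) (I : SAtom → Set A), ∀ φ ∈ GammaCore n, φ.sat I) ∧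
    (¬ ∃ (A : Type) (_ : Nonempty A) (I : SAtom → Set A), ∀ φ ∈ Gamma n, φ.sat I) := by
  obtain ⟨m, rfl⟩ : ∃ m, n = m + 1 := ⟨n - 1, by omega⟩
  refine ⟨fun ⟨A, _, I, hI⟩ => not_sat_gammaCore m I hI, fun ⟨A, _, I, hI⟩ => ?_⟩
  exact not_sat_gammaCore m I fun φ hφ => hI φ (gammaCore_subset_gamma _ hφ)
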